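/- arXiv:1810.12335 — 4 statements merged into one kernel-verified Lean document; each statement's English description precedes it below -/
import Mathlib

section
/- Let d_A, d_R be positive natural numbers and let ρ be a complex positive semidefinite matrix indexed by (Fin d_A) × (Fin d_R) with trace 1, satisfying the energy constraint ∑_{(n,r)} (n : ℝ) · Re(ρ (n,r) (n,r)) ≤ E for some E > 0. Let M be a natural number with E < M + 1, let Π be the diagonal projector onto the index pairs (n,r) with n ≤ M, and let ρ^M = (Π ρ Π) / Tr(Π ρ Π) be the normalized truncation of ρ. Then (1/2) · ∑_i |λ_i(ρ − ρ^M)| ≤ √(E/(M+1)), where λ_i(ρ − ρ^M) are the eigenvalues of the Hermitian matrix ρ − ρ^M (so the left-hand side is half the trace norm of ρ − ρ^M). -/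
/-!
Write `ρ = X Xᴴ` and let `p = Tr(P ρ P)`; the truncation is `ρᴹ = Y Yᴴ` with `Y = P X / √p`.
Pairing `ρ - ρᴹ` with its sign unitary and using Cauchy–Schwarz for the Hilbert–Schmidt inner
product gives `‖ρ - ρᴹ‖₁ ≤ ‖X - Y‖₂ ‖X + Y‖₂ = √((2 - 2√p)(2 + 2√p)) = 2√(1 - p)`
(gentle measurement), and Markov's inequality for the photon number gives `1 - p ≤ E / (M + 1)`.
-/

open scoped ComplexOrder
open Matrix

theorem Real.sqrt_two_sub_two_sqrt_mul_sqrt_two_add_two_sqrt {p : ℝ} (hp : 0 ≤ p) :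
    √(2 - 2 * √p) * √(2 + 2 * √p) = 2 * √(1 - p) := by
  rw [← Real.sqrt_mul' _ (by positivity),
    show (2 - 2 * √p) * (2 + 2 * √p) = 2 ^ 2 * (1 - p) by
      linear_combination -4 * Real.mul_self_sqrt hp,
    Real.sqrt_mul (by positivity), Real.sqrt_sq zero_le_two]

namespace Matrix

variable {𝕜 : Type*} [RCLike 𝕜] {m n : Type*} [Fintype m] [Fintype n]

theorem re_trace_conjTranspose_mul_le (A B : Matrix m n 𝕜) :
    RCLike.re (Aᴴ * B).trace ≤
      √(RCLike.re (Aᴴ * A).trace) * √(RCLike.re (Bᴴ * B).trace) := by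
  have h_inner (X Y : Matrix m n 𝕜) :
      (Xᴴ * Y).trace = inner 𝕜 (WithLp.toLp 2 X.vec) (WithLp.toLp 2 Y.vec) := by
    rw [EuclideanSpace.inner_toLp_toLp, dotProduct_comm, star_vec_dotProduct_vec]
  simp only [h_inner, ← norm_eq_sqrt_re_inner]
  exact re_inner_le_norm _ _

theorem IsHermitian.exists_trace_mul_eq_sum_abs_eigenvalues [DecidableEq n]
    {H : Matrix n n 𝕜} (hH : H.IsHermitian) :
    ∃ C : Matrix n n 𝕜, Cᴴ = C ∧ C * C = 1 ∧
      (H * C).trace = ((∑ i, |hH.eigenvalues i| : ℝ) : 𝕜) := by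
  set φ := Unitary.conjStarAlgAut 𝕜 _ hH.eigenvectorUnitary
  set s : n → 𝕜 := fun i => if 0 ≤ hH.eigenvalues i then 1 else -1
  refine ⟨φ (diagonal s), ?_, ?_, ?_⟩
  · rw [← star_eq_conjTranspose, ← map_star, star_eq_conjTranspose, diagonal_conjTranspose]
    congr 2
    funext i
    simp only [s, Pi.star_apply]
    split_ifs <;> simp
  · have hss : diagonal s * diagonal s = 1 := by
      rw [diagonal_mul_diagonal, ← diagonal_one]
      congr 1
      funext i
      simp only [s]
      split_ifs <;> simp
    rw [← map_mul, hss, map_one]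
  · conv_lhs => rw [hH.spectral_theorem]
    rw [← map_mul, Unitary.conjStarAlgAut_apply, trace_mul_cycle, Unitary.coe_star_mul_self,
      one_mul, diagonal_mul_diagonal, trace_diagonal, RCLike.ofReal_sum]
    refine Finset.sum_congr rfl fun i _ => ?_
    by_cases h : 0 ≤ hH.eigenvalues i
    · simp [s, h, abs_of_nonneg h]
    · simp [s, h, abs_of_neg (not_le.mp h)]

theorem IsHermitian.sum_abs_eigenvalues_le_of_eq_mul_conjTranspose_sub [DecidableEq n]
    {H : Matrix n n 𝕜} (hH : H.IsHermitian) {X Y : Matrix n m 𝕜}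
    (hXY : H = X * Xᴴ - Y * Yᴴ) :
    ∑ i, |hH.eigenvalues i| ≤
      √(RCLike.re ((X - Y)ᴴ * (X - Y)).trace) * √(RCLike.re ((X + Y)ᴴ * (X + Y)).trace) := by
  obtain ⟨C, hCH, hCC, hHC⟩ := hH.exists_trace_mul_eq_sum_abs_eigenvalues
  -- `(X + Y)(X - Y)ᴴ` differs from `H` by the skew-Hermitian `Y Xᴴ - X Yᴴ`, whose pairing with
  -- the Hermitian `C` has zero real part.
  have hskew : RCLike.re ((X - Y)ᴴ * (C * (X + Y))).trace = RCLike.re (H * C).trace := by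
    set z := (C * (Y * Xᴴ)).trace
    have hz : (C * (X * Yᴴ)).trace = star z := by
      rw [← trace_conjTranspose, conjTranspose_mul, conjTranspose_mul, conjTranspose_conjTranspose,
        hCH, trace_mul_comm]
    have hexpand : ((X - Y)ᴴ * (C * (X + Y))).trace = (H * C).trace + (z - star z) := by
      rw [trace_mul_comm, Matrix.mul_assoc, trace_mul_comm H, hXY, ← hz]
      simp only [conjTranspose_sub, Matrix.add_mul, Matrix.mul_sub, Matrix.mul_add, trace_add,
        trace_sub]
      ring
    rw [hexpand, map_add, map_sub, RCLike.star_def, RCLike.conj_re, sub_self, add_zero]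
  calc ∑ i, |hH.eigenvalues i| = RCLike.re (H * C).trace := by rw [hHC, RCLike.ofReal_re]
    _ = RCLike.re ((X - Y)ᴴ * (C * (X + Y))).trace := hskew.symm
    _ ≤ √(RCLike.re ((X - Y)ᴴ * (X - Y)).trace) *
          √(RCLike.re ((C * (X + Y))ᴴ * (C * (X + Y))).trace) :=
      re_trace_conjTranspose_mul_le _ _
    _ = _ := by
      rw [conjTranspose_mul, hCH, Matrix.mul_assoc, ← Matrix.mul_assoc C C, hCC, Matrix.one_mul]

theorem IsHermitian.coe_re_trace {A : Matrix n n 𝕜} (hA : A.IsHermitian) :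
    (RCLike.re A.trace : 𝕜) = A.trace := by
  rw [← RCLike.conj_eq_iff_re, ← RCLike.star_def, ← trace_conjTranspose, hA.eq]

open scoped MatrixOrder in
theorem PosSemidef.exists_eq_mul_conjTranspose {A : Matrix n n 𝕜} (hA : A.PosSemidef) :
    ∃ X : Matrix n n 𝕜, A = X * Xᴴ := by
  classical
  obtain ⟨B, hB⟩ := CStarAlgebra.nonneg_iff_eq_star_mul_self.mp hA.nonneg
  exact ⟨Bᴴ, by rw [hB, conjTranspose_conjTranspose, star_eq_conjTranspose]⟩

/-- The gentle measurement lemma. -/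
theorem PosSemidef.sum_abs_eigenvalues_sub_normalized_compression_le [DecidableEq n]
    {ρ P H : Matrix n n 𝕜} (hρ : ρ.PosSemidef) (htr : ρ.trace = 1) (hPH : Pᴴ = P)
    (hPP : P * P = P) (hp : 0 < RCLike.re (P * ρ * P).trace) (hH : H.IsHermitian)
    (hHρ : H = ρ - (P * ρ * P).trace⁻¹ • (P * ρ * P)) :
    ∑ i, |hH.eigenvalues i| ≤ 2 * √(1 - RCLike.re (P * ρ * P).trace) := by
  set p := RCLike.re (P * ρ * P).trace
  have hp_trace : (P * ρ * P).trace = p := by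
    have h := (hρ.mul_mul_conjTranspose_same P).isHermitian.coe_re_trace
    rw [hPH] at h
    exact h.symm
  have hsqrt : √p * √p = p := Real.mul_self_sqrt hp.le
  have hsqrt_pos : 0 < √p := Real.sqrt_pos.mpr hp
  obtain ⟨X, hρX⟩ := hρ.exists_eq_mul_conjTranspose
  set c : ℝ := (√p)⁻¹
  have hc : c * p = √p := by rw [inv_mul_eq_iff_eq_mul₀ hsqrt_pos.ne', hsqrt]
  have hcc : c * c = p⁻¹ := by rw [← mul_inv, hsqrt]
  set Y := (c : 𝕜) • (P * X)
  have hXPX : (Xᴴ * (P * X)).trace = p := by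
    rw [← hp_trace, trace_mul_comm, Matrix.mul_assoc, ← hρX, trace_mul_comm (P * ρ),
      ← Matrix.mul_assoc, hPP]
  have hPX : (P * X)ᴴ = Xᴴ * P := by rw [conjTranspose_mul, hPH]
  have hYH : Yᴴ = (c : 𝕜) • (Xᴴ * P) := by
    rw [conjTranspose_smul, RCLike.star_def, RCLike.conj_ofReal, hPX]
  have hXX : (Xᴴ * X).trace = 1 := by rw [trace_mul_comm, ← hρX, htr]
  have hXY : (Xᴴ * Y).trace = √p := by
    rw [Matrix.mul_smul, trace_smul, hXPX, smul_eq_mul, ← RCLike.ofReal_mul, hc]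
  have hYX : (Yᴴ * X).trace = √p := by
    rw [hYH, Matrix.smul_mul, trace_smul, Matrix.mul_assoc, hXPX, smul_eq_mul,
      ← RCLike.ofReal_mul, hc]
  have hYY : (Yᴴ * Y).trace = 1 := by
    rw [hYH, Matrix.smul_mul, Matrix.mul_smul, trace_smul, trace_smul, Matrix.mul_assoc,
      ← Matrix.mul_assoc P, hPP, hXPX, smul_eq_mul, smul_eq_mul, ← mul_assoc,
      ← RCLike.ofReal_mul, ← RCLike.ofReal_mul, hcc, inv_mul_cancel₀ hp.ne', RCLike.ofReal_one]
  have hHXY : H = X * Xᴴ - Y * Yᴴ := by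
    rw [hHρ, hp_trace, hρX, ← RCLike.ofReal_inv, ← hcc, hYH]
    simp only [Y, Matrix.smul_mul, Matrix.mul_smul, smul_smul, RCLike.ofReal_mul,
      Matrix.mul_assoc]
  refine (hH.sum_abs_eigenvalues_le_of_eq_mul_conjTranspose_sub hHXY).trans_eq ?_
  have hsub : ((X - Y)ᴴ * (X - Y)).trace = ((2 - 2 * √p : ℝ) : 𝕜) := by
    simp only [conjTranspose_sub, Matrix.sub_mul, Matrix.mul_sub, trace_sub, hXX, hXY, hYX, hYY]
    push_cast; ring
  have hadd : ((X + Y)ᴴ * (X + Y)).trace = ((2 + 2 * √p : ℝ) : 𝕜) := by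
    simp only [conjTranspose_add, Matrix.add_mul, Matrix.mul_add, trace_add, hXX, hXY, hYX, hYY]
    push_cast; ring
  rw [hsub, hadd, RCLike.ofReal_re, RCLike.ofReal_re,
    Real.sqrt_two_sub_two_sqrt_mul_sqrt_two_add_two_sqrt hp.le]

theorem PosSemidef.mul_one_sub_re_trace_compression_le {ι : Type*} [Fintype ι] [DecidableEq ι]
    {ρ P : Matrix ι ι 𝕜} (hρ : ρ.PosSemidef) (htr : ρ.trace = 1) (N : ι → ℕ) (M : ℕ)
    (hP : P = diagonal fun i => if N i ≤ M then 1 else 0) :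
    ((M : ℝ) + 1) * (1 - RCLike.re (P * ρ * P).trace) ≤ ∑ i, (N i : ℝ) * RCLike.re (ρ i i) := by
  have hdiag (i : ι) : 0 ≤ RCLike.re (ρ i i) := (RCLike.nonneg_iff.mp hρ.diag_nonneg).1
  have htail :
      1 - RCLike.re (P * ρ * P).trace = ∑ i, if N i ≤ M then 0 else RCLike.re (ρ i i) := by
    have hone : ∑ i, RCLike.re (ρ i i) = 1 := by
      simpa [trace, map_sum] using congrArg RCLike.re htr
    rw [← hone, trace, map_sum, ← Finset.sum_sub_distrib]
    refine Finset.sum_congr rfl fun i _ => ?_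
    by_cases h : N i ≤ M <;> simp [hP, h]
  rw [htail, Finset.mul_sum]
  refine Finset.sum_le_sum fun i _ => ?_
  split_ifs with h
  · simpa using mul_nonneg (Nat.cast_nonneg (N i)) (hdiag i)
  · exact mul_le_mul_of_nonneg_right (by exact_mod_cast not_le.mp h) (hdiag i)

end Matrix

theorem truncation_trace_distance_bound_general
    (d_A d_R : ℕ)
    (ρ : Matrix (Fin d_A × Fin d_R) (Fin d_A × Fin d_R) ℂ)
    (hρ : ρ.PosSemidef) (htr : ρ.trace = 1)
    (E : ℝ)
    (henergy : ∑ x : Fin d_A × Fin d_R, ((x.1 : ℕ) : ℝ) * (ρ x x).re ≤ E)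
    (M : ℕ) (hM : E < M + 1)
    (P : Matrix (Fin d_A × Fin d_R) (Fin d_A × Fin d_R) ℂ)
    (hP : P = Matrix.diagonal (fun x => if (x.1 : ℕ) ≤ M then 1 else 0))
    (ρM : Matrix (Fin d_A × Fin d_R) (Fin d_A × Fin d_R) ℂ)
    (hρM : ρM = ((P * ρ * P).trace)⁻¹ • (P * ρ * P))
    (hherm : (ρ - ρM).IsHermitian) :
    (1/2 : ℝ) * ∑ i, |hherm.eigenvalues i| ≤ Real.sqrt (E / (M + 1)) := by
  have hPH : Pᴴ = P := by
    rw [hP, diagonal_conjTranspose]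
    congr 1
    funext x
    by_cases h : (x.1 : ℕ) ≤ M <;> simp [h]
  have hPP : P * P = P := by
    rw [hP, diagonal_mul_diagonal]
    congr 1
    funext x
    by_cases h : (x.1 : ℕ) ≤ M <;> simp [h]
  have hM1 : (0 : ℝ) < M + 1 := by positivity
  have htail : 1 - (P * ρ * P).trace.re ≤ E / (M + 1) := by
    rw [le_div_iff₀ hM1, mul_comm]
    exact (hρ.mul_one_sub_re_trace_compression_le htr (fun x => x.1) M hP).trans henergy
  have hp : 0 < (P * ρ * P).trace.re := by
    linarith [(div_lt_one hM1).mpr hM]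
  have hbound := hρ.sum_abs_eigenvalues_sub_normalized_compression_le htr hPH hPP hp hherm
    (by rw [hρM])
  rw [RCLike.re_to_complex] at hbound
  calc (1/2 : ℝ) * ∑ i, |hherm.eigenvalues i| ≤ √(1 - (P * ρ * P).trace.re) := by linarith
    _ ≤ √(E / (M + 1)) := Real.sqrt_le_sqrt htail

/-- Finite-dimensional rendering of Proposition 1: a bipartite density matrix
with mean photon number at most `E` on the `A` system is within trace distance
`2 * √(E/(M+1))` of its normalized truncation to photon numbers at most `M`. -/
theorem truncation_trace_distance_bound
    (d_A d_R : ℕ) (hdA : 0 < d_A) (hdR : 0 < d_R)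
    (ρ : Matrix (Fin d_A × Fin d_R) (Fin d_A × Fin d_R) ℂ)
    (hρ : ρ.PosSemidef) (htr : ρ.trace = 1)
    (E : ℝ) (hE : 0 < E)
    (henergy : ∑ x : Fin d_A × Fin d_R, ((x.1 : ℕ) : ℝ) * (ρ x x).re ≤ E)
    (M : ℕ) (hM : E < M + 1)
    (P : Matrix (Fin d_A × Fin d_R) (Fin d_A × Fin d_R) ℂ)
    (hP : P = Matrix.diagonal (fun x => if (x.1 : ℕ) ≤ M then 1 else 0))
    (ρM : Matrix (Fin d_A × Fin d_R) (Fin d_A × Fin d_R) ℂ)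
    (hρM : ρM = ((P * ρ * P).trace)⁻¹ • (P * ρ * P))
    (hherm : (ρ - ρM).IsHermitian) :
    (1/2 : ℝ) * ∑ i, |hherm.eigenvalues i| ≤ Real.sqrt (E / (M + 1)) :=
  truncation_trace_distance_bound_general d_A d_R ρ hρ htr E henergy M hM P hP ρM hρM hherm
end

section
/- For η ∈ [0, 1) and δ ∈ ℂ, the coherent vectors satisfy |⟪c(√η · δ), c(δ)⟫|² = exp(−|δ|² (1 − √η)²); consequently, for fixed η < 1, this quantity tends to 0 as |δ| → ∞. -/
/-! Summing the Fock-basis terms gives the exponential series of `conj β * δ`, so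
`⟪c β, c δ⟫ = exp (-(|β|² + |δ|²)/2 + conj β * δ)` and hence `|⟪c β, c δ⟫|² = exp (-|β - δ|²)`.
With `β = √η δ` the exponent is `-|δ|² (1 - √η)²`, which tends to `-∞` once `√η ≠ 1`. -/

/-- The coherent state vector `c(α) ∈ ℓ²(ℕ, ℂ)`, whose `n`-th Fock-basis
coefficient is `exp(−|α|²/2) · αⁿ / √(n!)`. -/
noncomputable def coherent (α : ℂ) : lp (fun _ : ℕ => ℂ) 2 :=
  ⟨fun n => Complex.exp (-((‖α‖ ^ 2 : ℝ) : ℂ) / 2) * α ^ n /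
      (Real.sqrt (Nat.factorial n) : ℂ), by
    apply memℓp_gen
    have hs : Summable (fun n : ℕ =>
        (Real.exp (-‖α‖ ^ 2 / 2)) ^ 2 * ((‖α‖ ^ 2) ^ n / (Nat.factorial n))) := by
      exact (Real.summable_pow_div_factorial _).mul_left _
    apply hs.congr
    intro n
    have hfac : (0 : ℝ) < Real.sqrt (Nat.factorial n) := by positivity
    have h2 : (2 : ENNReal).toReal = ((2 : ℕ) : ℝ) := by norm_num
    rw [h2, Real.rpow_natCast]
    simp only [norm_div, norm_mul]
    rw [Complex.norm_exp]
    have hre : (-((‖α‖ ^ 2 : ℝ) : ℂ) / 2).re = -‖α‖ ^ 2 / 2 := by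
      simp [← Complex.ofReal_pow]
    rw [hre, norm_pow, Complex.norm_real, Real.norm_eq_abs, abs_of_pos hfac, eq_comm, div_pow, mul_pow,
      Real.sq_sqrt (Nat.cast_nonneg _)]
    ring⟩

lemma inner_coherent_apply (β δ : ℂ) (n : ℕ) :
    (inner ℂ (coherent β n) (coherent δ n) : ℂ) =
      Complex.exp (-((‖β‖ ^ 2 : ℝ) : ℂ) / 2) * Complex.exp (-((‖δ‖ ^ 2 : ℝ) : ℂ) / 2) *
        ((starRingEnd ℂ β * δ) ^ n / n.factorial) := by
  have hfac : (Real.sqrt n.factorial : ℂ) * Real.sqrt n.factorial = n.factorial := by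
    rw [← Complex.ofReal_mul, Real.mul_self_sqrt (Nat.cast_nonneg _), Complex.ofReal_natCast]
  have hconj : starRingEnd ℂ (Complex.exp (-((‖β‖ ^ 2 : ℝ) : ℂ) / 2)) =
      Complex.exp (-((‖β‖ ^ 2 : ℝ) : ℂ) / 2) := by
    rw [← Complex.exp_conj, map_div₀, map_neg, Complex.conj_ofReal, map_ofNat]
  rw [RCLike.inner_apply']
  simp only [coherent]
  rw [map_div₀, map_mul, hconj, map_pow, Complex.conj_ofReal, mul_pow, ← hfac]
  field_simp

lemma inner_coherent (β δ : ℂ) :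
    (inner ℂ (coherent β) (coherent δ) : ℂ) =
      Complex.exp (((-(‖β‖ ^ 2 + ‖δ‖ ^ 2) / 2 : ℝ) : ℂ) + starRingEnd ℂ β * δ) := by
  have hexp : Complex.exp (starRingEnd ℂ β * δ) =
      ∑' n : ℕ, (starRingEnd ℂ β * δ) ^ n / n.factorial := by
    rw [Complex.exp_eq_exp_ℂ, NormedSpace.exp_eq_tsum_div]
  rw [lp.inner_eq_tsum, tsum_congr (inner_coherent_apply β δ), tsum_mul_left, ← hexp,
    ← Complex.exp_add, ← Complex.exp_add]
  push_cast
  ring_nf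

lemma norm_inner_coherent_sq (β δ : ℂ) :
    ‖(inner ℂ (coherent β) (coherent δ) : ℂ)‖ ^ 2 = Real.exp (-‖β - δ‖ ^ 2) := by
  rw [inner_coherent, Complex.norm_exp, ← Real.exp_nat_mul, norm_sub_sq (𝕜 := ℂ),
    RCLike.inner_apply', Complex.add_re, Complex.ofReal_re]
  congr 1
  simp only [RCLike.re_to_complex]
  push_cast
  ring

lemma norm_inner_coherent_ofReal_mul_sq (s : ℝ) (δ : ℂ) :
    ‖(inner ℂ (coherent ((s : ℂ) * δ)) (coherent δ) : ℂ)‖ ^ 2 =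
      Real.exp (-‖δ‖ ^ 2 * (1 - s) ^ 2) := by
  rw [norm_inner_coherent_sq, ← sub_one_mul, norm_mul, mul_pow, ← Complex.ofReal_one,
    ← Complex.ofReal_sub, Complex.norm_real, Real.norm_eq_abs, sq_abs]
  ring_nf

lemma tendsto_exp_neg_norm_sq_mul {E : Type*} [SeminormedAddCommGroup E] {c : ℝ} (hc : 0 < c) :
    Filter.Tendsto (fun z : E => Real.exp (-‖z‖ ^ 2 * c))
      (Filter.comap (fun z : E => ‖z‖) Filter.atTop) (nhds 0) := by
  refine Real.tendsto_exp_comp_nhds_zero.mpr ?_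
  simp only [neg_mul]
  exact Filter.tendsto_neg_atTop_atBot.comp
    (((Filter.tendsto_pow_atTop two_ne_zero).comp Filter.tendsto_comap).atTop_mul_const hc)

/-- For `η ∈ [0,1)`, the fidelity between the coherent states `|√η δ⟩` and `|δ⟩`
is `exp(−|δ|²(1−√η)²)`, and it tends to `0` as `|δ| → ∞`. -/
theorem coherent_loss_fidelity (η : ℝ) (hη : η ∈ Set.Ico (0 : ℝ) 1) :
    (∀ δ : ℂ,
      ‖(inner ℂ (coherent ((Real.sqrt η : ℂ) * δ)) (coherent δ) : ℂ)‖ ^ 2 =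
        Real.exp (-‖δ‖ ^ 2 * (1 - Real.sqrt η) ^ 2)) ∧
    Filter.Tendsto
      (fun δ : ℂ =>
        ‖(inner ℂ (coherent ((Real.sqrt η : ℂ) * δ)) (coherent δ) : ℂ)‖ ^ 2)
      (Filter.comap (fun z : ℂ => ‖z‖) Filter.atTop) (nhds 0) := by
  have hsqrt_lt_one : Real.sqrt η < 1 := (Real.sqrt_lt' one_pos).mpr (by simpa using hη.2)
  refine ⟨norm_inner_coherent_ofReal_mul_sq _, ?_⟩
  simp only [norm_inner_coherent_ofReal_mul_sq]
  exact tendsto_exp_neg_norm_sq_mul (pow_pos (sub_pos.mpr hsqrt_lt_one) 2)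
end

section
/- Let η ∈ [0, 1] and E ∈ (0, 1), and set a = √(E(1 − E)) · (1 − √η) and b = E(1 − η). Let ϱ be the real symmetric 4×4 matrix with ϱ₀₃ = ϱ₃₀ = −a, ϱ₁₁ = b, ϱ₃₃ = −b, and all other entries zero. Then the sum of the absolute values of the eigenvalues of ϱ equals E(1 − η) + (1 − √η) · √(E (4 + E(η + 2√η − 3))); equivalently, half the trace norm of ϱ equals d₁(η, E) = (1/2)[E(1 − η) + (1 − √η)√(E(4 + E(η + 2√η − 3)))]. -/
/-!
In the basis `|00⟩, |01⟩, |10⟩, |11⟩` the matrix splits into the `1 × 1` blocks `b` and `0` and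
the `2 × 2` block `[[0, -a], [-a, -b]]` on `|00⟩, |11⟩`, whose eigenvalues `(-b ± s) / 2`,
`s = √(b² + 4a²)`, have opposite signs. Hence for `b ≥ 0` the sum of the absolute values of the
eigenvalues is `b + s`, and with the given `a`, `b` one has
`b² + 4a² = (1 - √η)² E (4 + E(η + 2√η - 3))`.
-/

open Polynomial Matrix

theorem Matrix.IsHermitian.sum_comp_eigenvalues {n : Type*} [Fintype n] [DecidableEq n]
    {A : Matrix n n ℝ} (hA : A.IsHermitian) (f : ℝ → ℝ) :
    ∑ i, f (hA.eigenvalues i) = (A.charpoly.roots.map f).sum := by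
  rw [hA.roots_charpoly_eq_eigenvalues, Multiset.map_map]
  rfl

def displacementDifference (a b : ℝ) : Matrix (Fin 4) (Fin 4) ℝ :=
  !![0, 0, 0, -a;
     0, b, 0, 0;
     0, 0, 0, 0;
     -a, 0, 0, -b]

theorem charpoly_displacementDifference (a b : ℝ) :
    (displacementDifference a b).charpoly = X * (X - C b) * (X ^ 2 + C b * X - C (a ^ 2)) := by
  rw [displacementDifference, Matrix.charpoly, Matrix.det_succ_row_zero]
  simp [Fin.sum_univ_succ, Matrix.det_fin_three, charmatrix_apply, Matrix.submatrix,
    Fin.succAbove]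
  ring

theorem roots_charpoly_displacementDifference (a b : ℝ) :
    (displacementDifference a b).charpoly.roots =
      {0, b, (√(b ^ 2 + 4 * a ^ 2) - b) / 2, (-√(b ^ 2 + 4 * a ^ 2) - b) / 2} := by
  set s := √(b ^ 2 + 4 * a ^ 2)
  have hs : s ^ 2 = b ^ 2 + 4 * a ^ 2 := Real.sq_sqrt (by positivity)
  have hsum : (s - b) / 2 + (-s - b) / 2 = -b := by ring
  have hprod : (s - b) / 2 * ((-s - b) / 2) = -a ^ 2 := by linear_combination (-1 / 4 : ℝ) * hs
  have hquadratic : X ^ 2 + C b * X - C (a ^ 2) =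
      (X - C ((s - b) / 2)) * (X - C ((-s - b) / 2)) := by
    calc X ^ 2 + C b * X - C (a ^ 2)
        = X ^ 2 - C ((s - b) / 2 + (-s - b) / 2) * X + C ((s - b) / 2 * ((-s - b) / 2)) := by
          rw [hsum, hprod, map_neg, map_neg]; ring
      _ = (X - C ((s - b) / 2)) * (X - C ((-s - b) / 2)) := by
          rw [map_add, map_mul]; ring
  rw [charpoly_displacementDifference, hquadratic, ← roots_multiset_prod_X_sub_C
    ({0, b, (s - b) / 2, (-s - b) / 2} : Multiset ℝ)]
  simp only [Multiset.insert_eq_cons, Multiset.map_cons, Multiset.map_singleton,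
    Multiset.prod_cons, Multiset.prod_singleton, map_zero, sub_zero, mul_assoc]

theorem sum_abs_eigenvalues_displacementDifference {a b : ℝ} (hb : 0 ≤ b)
    (hA : (displacementDifference a b).IsHermitian) :
    ∑ i, |hA.eigenvalues i| = b + √(b ^ 2 + 4 * a ^ 2) := by
  have hbs : b ≤ √(b ^ 2 + 4 * a ^ 2) :=
    Real.le_sqrt_of_sq_le (by nlinarith [sq_nonneg a])
  rw [hA.sum_comp_eigenvalues, roots_charpoly_displacementDifference]
  simp only [Multiset.insert_eq_cons, Multiset.map_cons, Multiset.map_singleton,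
    Multiset.sum_cons, Multiset.sum_singleton, abs_zero, abs_of_nonneg hb,
    abs_of_nonneg (by linarith : 0 ≤ (√(b ^ 2 + 4 * a ^ 2) - b) / 2),
    abs_of_nonpos (by linarith : (-√(b ^ 2 + 4 * a ^ 2) - b) / 2 ≤ 0)]
  ring

theorem sqrt_displacement_discriminant {η E : ℝ} (hη : η ∈ Set.Icc (0 : ℝ) 1)
    (hE : E ∈ Set.Icc (0 : ℝ) 1) :
    √((E * (1 - η)) ^ 2 + 4 * (√(E * (1 - E)) * (1 - √η)) ^ 2) =
      (1 - √η) * √(E * (4 + E * (η + 2 * √η - 3))) := by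
  obtain ⟨hη0, hη1⟩ := hη
  obtain ⟨hE0, hE1⟩ := hE
  have hu : √η ^ 2 = η := Real.sq_sqrt hη0
  have hv : √(E * (1 - E)) ^ 2 = E * (1 - E) := Real.sq_sqrt (by nlinarith)
  have hdisc : (E * (1 - η)) ^ 2 + 4 * (√(E * (1 - E)) * (1 - √η)) ^ 2 =
      (1 - √η) ^ 2 * (E * (4 + E * (η + 2 * √η - 3))) := by
    linear_combination 4 * (1 - √η) ^ 2 * hv + E ^ 2 * (2 - η - √η ^ 2 + (1 - √η) ^ 2) * hu
  rw [hdisc, Real.sqrt_mul (sq_nonneg _), Real.sqrt_sq (by simpa using Real.sqrt_le_one.mpr hη1)]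

/-- The trace norm (sum of absolute values of eigenvalues) of the difference
`ϱ = ρ_RA − ψ_RA` between the output of the lossy displacement approximation and
the optimal energy-constrained input state, for `0 < E < 1`, equals
`2 d₁(η, E) = E(1−η) + (1−√η)√(E(4 + E(η + 2√η − 3)))`. -/
theorem trace_norm_displacement_difference (η E : ℝ)
    (hη : η ∈ Set.Icc (0 : ℝ) 1) (hE : E ∈ Set.Ioo (0 : ℝ) 1)
    (a b : ℝ) (ha : a = Real.sqrt (E * (1 - E)) * (1 - Real.sqrt η)) (hb : b = E * (1 - η))
    (ϱ : Matrix (Fin 4) (Fin 4) ℝ)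
    (hϱ : ϱ = !![0, 0, 0, -a;
                 0, b, 0, 0;
                 0, 0, 0, 0;
                 -a, 0, 0, -b])
    (hherm : ϱ.IsHermitian) :
    ∑ i, |hherm.eigenvalues i| =
      E * (1 - η) + (1 - Real.sqrt η) * Real.sqrt (E * (4 + E * (η + 2 * Real.sqrt η - 3))) := by
  obtain rfl : ϱ = displacementDifference a b := hϱ
  subst ha hb
  have hb0 : 0 ≤ E * (1 - η) := mul_nonneg hE.1.le (by linarith [hη.2])
  rw [sum_abs_eigenvalues_displacementDifference hb0 hherm,
    sqrt_displacement_discriminant hη (Set.Ioo_subset_Icc_self hE)]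
end

section
/- For all z > 0 and c > 0, the Gaussian overlap integral satisfies 2π · ∫_{ℝ²} (1/π) exp(−x²/z − z p²) · (1/(π √((z + c)/z))) exp(−x²/(z + c) − z p²) dx dp = √(2z / (2z + c)); moreover, for fixed c > 0, √(2z/(2z + c)) tends to 0 as z → 0 from above. -/
/-!
The two Wigner functions are Gaussians whose exponents add, so the product integrand factors
as `exp (-a x²) * exp (-2z p²)` with `a = 1/z + 1/(z+c)`. Integrating in `p` and then in `x`
with `∫ exp (-b x²) = √(π / b)` reduces the overlap to an identity between square roots,
which is checked by squaring. The limit is continuity of `z ↦ √(2z/(2z+c))` at `0`.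
-/

open Real MeasureTheory Filter Topology

lemma squeezed_wigner_mul_eq {z c : ℝ} (hz : z ≠ 0) (hzc : z + c ≠ 0) (x p : ℝ) :
    (1 / π) * exp (-x ^ 2 / z - z * p ^ 2) *
        ((1 / (π * √((z + c) / z))) * exp (-x ^ 2 / (z + c) - z * p ^ 2)) =
      1 / (π ^ 2 * √((z + c) / z)) *
        (exp (-(1 / z + 1 / (z + c)) * x ^ 2) * exp (-(2 * z) * p ^ 2)) := by
  have hexp : (-x ^ 2 / z - z * p ^ 2) + (-x ^ 2 / (z + c) - z * p ^ 2) =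
      -(1 / z + 1 / (z + c)) * x ^ 2 + -(2 * z) * p ^ 2 := by
    field_simp
    ring
  rw [← exp_add, ← hexp, exp_add]
  ring

lemma squeezed_overlap_normalization {z c : ℝ} (hz : 0 < z) (hzc : 0 < z + c) :
    2 * π * (1 / (π ^ 2 * √((z + c) / z)) *
        (√(π / (1 / z + 1 / (z + c))) * √(π / (2 * z)))) =
      √(2 * z / (2 * z + c)) := by
  have h2zc : 0 < 2 * z + c := by linarith
  symm
  rw [sqrt_eq_iff_mul_self_eq (by positivity) (by positivity), ← sq]
  simp only [mul_pow, div_pow, one_pow]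
  rw [sq_sqrt (by positivity), sq_sqrt (by positivity), sq_sqrt (by positivity)]
  field_simp
  ring

lemma tendsto_sqrt_two_mul_div_nhds_zero {c : ℝ} (hc : c ≠ 0) :
    Tendsto (fun z : ℝ => √(2 * z / (2 * z + c))) (𝓝 0) (𝓝 0) := by
  have hcont : ContinuousAt (fun z : ℝ => √(2 * z / (2 * z + c))) 0 :=
    (ContinuousAt.div (by fun_prop) (by fun_prop) (by simpa using hc)).sqrt
  simpa using hcont.tendsto

/-- The Gaussian overlap integral giving the fidelity between a squeezed vacuum
state and its image under the residual channel `Ξ^{η,r_E}` equals `√(2z/(2z+c))`,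
which tends to `0` as `z → 0⁺` for fixed `c > 0`. -/
theorem squeezed_vacuum_fidelity (c : ℝ) (hc : 0 < c) :
    (∀ z : ℝ, 0 < z →
      2 * Real.pi *
        ∫ x : ℝ, ∫ p : ℝ,
          (1 / Real.pi) * Real.exp (-x ^ 2 / z - z * p ^ 2) *
            ((1 / (Real.pi * Real.sqrt ((z + c) / z))) *
              Real.exp (-x ^ 2 / (z + c) - z * p ^ 2)) =
        Real.sqrt (2 * z / (2 * z + c))) ∧
    Filter.Tendsto (fun z : ℝ => Real.sqrt (2 * z / (2 * z + c)))
      (nhdsWithin 0 (Set.Ioi 0)) (nhds 0) := by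
  refine ⟨fun z hz => ?_,
    (tendsto_sqrt_two_mul_div_nhds_zero hc.ne').mono_left nhdsWithin_le_nhds⟩
  have hzc : 0 < z + c := by linarith
  simp only [squeezed_wigner_mul_eq hz.ne' hzc.ne', integral_const_mul, integral_mul_const,
    integral_gaussian]
  exact squeezed_overlap_normalization hz hzc
end
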